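/- arXiv:2411.16315 — 2 statements merged into one kernel-verified Lean document; each statement's English description precedes it below -/
import Mathlib

section
/- Let M be a MAG over V = {X, Y} ∪ O satisfying the pretreatment setup, in which X and Y are joined by the bidirected edge X ↔ Y. Suppose there is a discriminating path for X, i.e., a path ⟨S, W_1, …, W_k, X, Y⟩ with k ≥ 1 such that S is not adjacent to Y and every W_i is a collider on the path and a parent of Y. Then there exists a set Z ⊆ MB(Y) \ {X} with S ∉ Z such that S and X are m-connected given Z and S and Y are m-separated by Z. (Shielded-collider case in Scenario 2 of the proof of Theorem 4: necessity of rule R2(ii).) -/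
namespace CausalGraph

/-- A directed mixed graph: directed edges `dir a b` (a → b) and bidirected
edges `bidir a b` (a ↔ b), with at most one edge between any two vertices
and no self-loops. -/
structure MixedGraph (V : Type*) where
  dir : V → V → Prop
  bidir : V → V → Prop
  bidir_symm : ∀ a b, bidir a b → bidir b a
  dir_irrefl : ∀ a, ¬ dir a a
  bidir_irrefl : ∀ a, ¬ bidir a a
  dir_not_dir : ∀ a b, dir a b → ¬ dir b a
  dir_not_bidir : ∀ a b, dir a b → ¬ bidir a b

variable {V : Type*}

/-- Two vertices are adjacent if there is an edge (of any kind) between them. -/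
def MixedGraph.adj (G : MixedGraph V) (a b : V) : Prop :=
  G.dir a b ∨ G.dir b a ∨ G.bidir a b

/-- There is an edge between `a` and `b` with an arrowhead at `b`. -/
def ArrowInto (G : MixedGraph V) (a b : V) : Prop :=
  G.dir a b ∨ G.bidir a b

/-- `p` is a path between `a` and `b`: a list of distinct vertices, each
consecutive pair adjacent, starting at `a` and ending at `b`. -/
def IsPathBetween (G : MixedGraph V) (p : List V) (a b : V) : Prop :=
  List.Chain' G.adj p ∧ p.Nodup ∧ p.head? = some a ∧ p.getLast? = some b ∧ 2 ≤ p.length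

/-- `p` is a directed path from `a` to `b`: all edges are directed edges
pointing toward `b`. -/
def IsDirectedPath (G : MixedGraph V) (p : List V) (a b : V) : Prop :=
  List.Chain' G.dir p ∧ p.Nodup ∧ p.head? = some a ∧ p.getLast? = some b ∧ 2 ≤ p.length

/-- `a` is an ancestor of `b` (and `b` a descendant of `a`): `a = b` or there
is a directed path from `a` to `b`. -/
def Ancestor (G : MixedGraph V) (a b : V) : Prop :=
  a = b ∨ ∃ p, IsDirectedPath G p a b

/-- `w` is an intermediate (non-endpoint) vertex of the path `p`. -/
def IsIntermediateOn (p : List V) (w : V) : Prop :=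
  ∃ (u v : V) (l₁ l₂ : List V), p = l₁ ++ u :: w :: v :: l₂

/-- `w` is a collider on the path `p`: both edges of the path at `w` have an
arrowhead at `w`. -/
def IsColliderOn (G : MixedGraph V) (p : List V) (w : V) : Prop :=
  ∃ (u v : V) (l₁ l₂ : List V), p = l₁ ++ u :: w :: v :: l₂ ∧
    ArrowInto G u w ∧ ArrowInto G v w

/-- `w` is a non-collider intermediate vertex on the path `p`. -/
def IsNonColliderOn (G : MixedGraph V) (p : List V) (w : V) : Prop :=
  IsIntermediateOn p w ∧ ¬ IsColliderOn G p w

/-- The path `p` between `a` and `b` (with `a, b ∉ Z`) is m-connecting given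
`Z`: every non-collider on it is not in `Z`, and every collider on it has a
descendant in `Z`. -/
def MConnPath (G : MixedGraph V) (Z : Set V) (p : List V) (a b : V) : Prop :=
  IsPathBetween G p a b ∧ a ∉ Z ∧ b ∉ Z ∧
    (∀ w, IsNonColliderOn G p w → w ∉ Z) ∧
    (∀ w, IsColliderOn G p w → ∃ d ∈ Z, Ancestor G w d)

/-- `a` and `b` are m-separated by `Z`: no path between them is m-connecting
given `Z`. -/
def MSep (G : MixedGraph V) (Z : Set V) (a b : V) : Prop :=
  ∀ p, ¬ MConnPath G Z p a b

/-- `a` and `b` are m-connected given `Z`. -/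
def MConn (G : MixedGraph V) (Z : Set V) (a b : V) : Prop :=
  ∃ p, MConnPath G Z p a b

/-- Set version of m-separation: every vertex of `A` is m-separated from every
vertex of `B` by `Z`. -/
def MSepSets (G : MixedGraph V) (Z A B : Set V) : Prop :=
  ∀ a ∈ A, ∀ b ∈ B, MSep G Z a b

/-- `G` is a maximal ancestral graph (MAG): it is ancestral (no directed or
almost directed cycles), and every pair of distinct non-adjacent vertices is
m-separated by some set of vertices. -/
def IsMAG (G : MixedGraph V) : Prop :=
  (∀ a b, G.dir a b → ¬ Ancestor G b a) ∧
  (∀ a b, G.bidir a b → ¬ Ancestor G a b) ∧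
  (∀ a b, a ≠ b → ¬ G.adj a b → ∃ Z : Set V, a ∉ Z ∧ b ∉ Z ∧ MSep G Z a b)

/-- `p` is a collider path between `a` and `b`: every intermediate vertex is a
collider on it. -/
def IsColliderPathBetween (G : MixedGraph V) (p : List V) (a b : V) : Prop :=
  IsPathBetween G p a b ∧ ∀ w, IsIntermediateOn p w → IsColliderOn G p w

/-- The Markov blanket of `y`: all vertices adjacent to `y`, together with all
vertices non-adjacent to `y` joined to `y` by a collider path. -/
def MarkovBlanket (G : MixedGraph V) (y : V) : Set V :=
  {v | v ≠ y ∧ (G.adj v y ∨ (¬ G.adj v y ∧ ∃ p, IsColliderPathBetween G p v y))}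

/-- The directed edge `x → y` is visible: there is a vertex `s` not adjacent
to `y` such that either there is an edge between `s` and `x` with an arrowhead
at `x`, or there is a collider path from `s` to `x` with an arrowhead at `x`
all of whose intermediate vertices are parents of `y`. -/
def VisibleEdge (G : MixedGraph V) (x y : V) : Prop :=
  G.dir x y ∧ ∃ s, s ≠ y ∧ ¬ G.adj s y ∧
    (ArrowInto G s x ∨
      ∃ p, IsColliderPathBetween G p s x ∧
        (∃ (l : List V) (u : V), p = l ++ [u, x] ∧ ArrowInto G u x) ∧
        (∀ w, IsIntermediateOn p w → G.dir w y))

/-- A non-causal path from `x` to `y`: a path between `x` and `y` that is not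
a directed path from `x` to `y`. -/
def NonCausalPath (G : MixedGraph V) (p : List V) (a b : V) : Prop :=
  IsPathBetween G p a b ∧ ¬ IsDirectedPath G p a b

/-- `Z` blocks every non-causal path from `x` to `y`. -/
def BlocksAllNonCausal (G : MixedGraph V) (x y : V) (Z : Set V) : Prop :=
  ∀ p, NonCausalPath G p x y → ¬ MConnPath G Z p x y

/-- `Z` satisfies the generalized adjustment criterion relative to `(x, y)`:
every directed path from `x` to `y` starts with a visible directed edge out of
`x`, `Z` contains no descendant of any vertex lying on a directed path from
`x` to `y`, and `Z` blocks every non-causal path from `x` to `y`. -/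
def ValidAdjustment (G : MixedGraph V) (x y : V) (Z : Set V) : Prop :=
  (∀ (p : List V) (w : V) (l : List V),
      IsDirectedPath G p x y → p = x :: w :: l → VisibleEdge G x w) ∧
  (∀ v ∈ Z, ¬ ∃ (w : V) (p : List V), IsDirectedPath G p x y ∧ w ∈ p ∧ Ancestor G w v) ∧
  BlocksAllNonCausal G x y Z

/-- Pretreatment setup: `G` is a MAG over `V = {x, y} ∪ O`, `x ≠ y`, `y` is
not an ancestor of `x`, and neither `x` nor `y` is an ancestor of any vertex
of `O`. -/
structure Pretreatment (G : MixedGraph V) (x y : V) (O : Set V) : Prop where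
  mag : IsMAG G
  ne : x ≠ y
  x_not_mem : x ∉ O
  y_not_mem : y ∉ O
  cover : (Set.univ : Set V) = {x, y} ∪ O
  y_not_anc_x : ¬ Ancestor G y x
  x_not_anc_O : ∀ v ∈ O, ¬ Ancestor G x v
  y_not_anc_O : ∀ v ∈ O, ¬ Ancestor G y v

section
open List

variable {V : Type*} {G : MixedGraph V} {a b c : V}

/-! ### index utilities -/

lemma chain'_getElem {R : V → V → Prop} {l : List V} (h : List.Chain' R l)
    (i : ℕ) (hi : i + 1 < l.length) : R l[i] l[i+1] := by
  have := List.isChain_iff_getElem.mp h i (by omega)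
  simpa [List.get_eq_getElem] using this

lemma chain'_of_getElem {R : V → V → Prop} {l : List V}
    (h : ∀ i (hi : i + 1 < l.length), R l[i] l[i+1]) : List.Chain' R l :=
  List.isChain_iff_getElem.mpr fun i hi => by simpa [List.get_eq_getElem] using h i (by omega)

lemma head?_eq_getElem {l : List V} (h : l ≠ []) :
    l.head? = some (l[0]'(List.length_pos_iff.mpr h)) := by
  cases l with
  | nil => simp at h
  | cons a t => rfl

lemma getElem_zero {l : List V} {a : V} (h : l.head? = some a) (h0 : 0 < l.length) :
    l[0] = a := by
  cases l with
  | nil => simp at h0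
  | cons b t => exact (by simpa using h : b = a)

lemma getElem_last {l : List V} {b : V} (h : l.getLast? = some b) (h0 : 0 < l.length) :
    l[l.length - 1] = b := by
  have hne : l ≠ [] := by intro he; subst he; simp at h0
  rw [List.getLast?_eq_getLast hne] at h
  rw [← List.getLast_eq_getElem hne]
  exact (Option.some_injective _ h)

lemma decomp_at (l : List V) (i : ℕ) (h : i + 2 < l.length) :
    l = l.take i ++ l[i] :: l[i+1] :: l[i+2] :: l.drop (i+3) := by
  conv_lhs => rw [← List.take_append_drop i l]
  rw [List.drop_eq_getElem_cons (show i < l.length by omega),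
      List.drop_eq_getElem_cons (show i+1 < l.length by omega),
      List.drop_eq_getElem_cons (show i+2 < l.length by omega)]

lemma idx_of_decomp {l l1 l2 : List V} {u w v : V} (h : l = l1 ++ u :: w :: v :: l2) :
    ∃ i, ∃ h2 : i + 2 < l.length,
      l[i]'(by omega) = u ∧ l[i+1]'(by omega) = w ∧ l[i+2] = v := by
  have hlen : l1.length + 2 < l.length := by
    subst h; simp only [List.length_append, List.length_cons]; omega
  refine ⟨l1.length, hlen, ?_, ?_, ?_⟩ <;>
  · subst h
    rw [List.getElem_append_right (by omega)]
    simp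

lemma isIntermediateOn_of_idx {p : List V} {i : ℕ} (h2 : i + 2 < p.length) :
    IsIntermediateOn p (p[i+1]'(by omega)) :=
  ⟨p[i]'(by omega), p[i+2], p.take i, p.drop (i+3), decomp_at p i h2⟩

lemma isColliderOn_of_idx {p : List V} {i : ℕ} (h2 : i + 2 < p.length)
    (h1 : ArrowInto G (p[i]'(by omega)) (p[i+1]'(by omega)))
    (h3 : ArrowInto G p[i+2] (p[i+1]'(by omega))) :
    IsColliderOn G p (p[i+1]'(by omega)) :=
  ⟨p[i]'(by omega), p[i+2], p.take i, p.drop (i+3), decomp_at p i h2, h1, h3⟩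

lemma idx_of_isIntermediateOn {p : List V} {w : V} (h : IsIntermediateOn p w) :
    ∃ i, ∃ h2 : i + 2 < p.length, p[i+1]'(by omega) = w := by
  obtain ⟨u, v, l1, l2, hdec⟩ := h
  obtain ⟨i, h2, -, hw, -⟩ := idx_of_decomp hdec
  exact ⟨i, h2, hw⟩

lemma idx_of_isColliderOn {p : List V} {w : V} (h : IsColliderOn G p w) :
    ∃ i, ∃ h2 : i + 2 < p.length, p[i+1]'(by omega) = w ∧
      ArrowInto G (p[i]'(by omega)) w ∧ ArrowInto G p[i+2] w := by
  obtain ⟨u, v, l1, l2, hdec, h1, h3⟩ := h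
  obtain ⟨i, h2, hu, hw, hv⟩ := idx_of_decomp hdec
  exact ⟨i, h2, hw, hu ▸ h1, hv ▸ h3⟩

lemma collider_arrows {p : List V} (hnd : p.Nodup) {i : ℕ} (h2 : i + 2 < p.length)
    (hc : IsColliderOn G p (p[i+1]'(by omega))) :
    ArrowInto G (p[i]'(by omega)) (p[i+1]'(by omega)) ∧
      ArrowInto G p[i+2] (p[i+1]'(by omega)) := by
  obtain ⟨j, hj2, hw, h1, h3⟩ := idx_of_isColliderOn hc
  have : j + 1 = i + 1 := by
    rw [← hnd.getElem_inj_iff (hi := by omega) (hj := by omega)]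
    exact hw
  have hji : j = i := by omega
  subst hji
  exact ⟨h1, h3⟩

lemma collider_idx_bounds {p : List V} (hnd : p.Nodup) {j : ℕ} (hj : j < p.length)
    (hc : IsColliderOn G p (p[j]'hj)) : 1 ≤ j ∧ j + 1 < p.length := by
  obtain ⟨i, h2, hw, -, -⟩ := idx_of_isColliderOn hc
  have : i + 1 = j := by
    rw [← hnd.getElem_inj_iff (hi := by omega) (hj := hj)]
    exact hw
  omega

/-! ### ancestor machinery -/

lemma ancestor_refl : Ancestor G a a := Or.inl rfl

lemma ancestor_of_dir (h : G.dir a b) : Ancestor G a b := by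
  have hne : a ≠ b := by rintro rfl; exact G.dir_irrefl a h
  exact Or.inr ⟨[a, b], by simp [List.Chain', h], by simp [hne], rfl, rfl, by simp⟩

lemma rtg_of_chain_mem {p : List V} (hch : List.Chain' G.dir p) (hh : p.head? = some a)
    (hc : c ∈ p) : Relation.ReflTransGen G.dir a c := by
  induction p generalizing a with
  | nil => simp at hc
  | cons u t ih =>
    have hu : u = a := by simpa using hh
    subst hu
    rcases List.mem_cons.mp hc with rfl | hct
    · rfl
    · cases t with
      | nil => simp at hct
      | cons z t' =>
        have h1 : G.dir u z := (List.isChain_cons_cons.mp hch).1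
        exact Relation.ReflTransGen.head h1 (ih (List.isChain_cons_cons.mp hch).2 rfl hct)

lemma ancestor_snoc (hab : Ancestor G a b) (hbc : G.dir b c) : Ancestor G a c := by
  rcases hab with rfl | ⟨p, hch, hnd, hh, hl, hlen⟩
  · exact ancestor_of_dir hbc
  by_cases hac : a = c
  · exact Or.inl hac
  by_cases hcp : c ∈ p
  · obtain ⟨l1, l2, rfl⟩ := List.append_of_mem hcp
    rcases l1 with _ | ⟨a', l1⟩
    · simp at hh
      exact absurd hh.symm hac
    · have hha : a' = a := by simpa using hh
      subst hha
      refine Or.inr ⟨(a' :: l1) ++ [c], ?_, ?_, ?_, ?_, ?_⟩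
      · exact hch.prefix ⟨l2, by simp⟩
      · refine List.Nodup.sublist ?_ hnd
        have : (a' :: l1) ++ [c] <+ (a' :: l1) ++ c :: l2 :=
          (List.cons_sublist_cons.mpr (List.nil_sublist l2)).append_left (a' :: l1)
        simpa using this
      · rfl
      · exact (show ((a' :: l1) ++ [c]).getLast? = some c from List.getLast?_concat)
      · simp only [List.cons_append, List.length_cons, List.length_append, List.length_nil]
        omega
  · refine Or.inr ⟨p ++ [c], ?_, ?_, ?_, ?_, ?_⟩
    · rw [List.Chain', List.isChain_append]
      refine ⟨hch, by simp, ?_⟩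
      intro u hu v hv
      simp at hv
      subst hv
      rw [hl] at hu
      simp at hu
      subst hu
      exact hbc
    · simp [List.nodup_append, hnd, hcp]; rintro a ha rfl; exact hcp ha
    · cases p with
      | nil => simp at hlen
      | cons a' t => simpa using hh
    · simp [List.getLast?_concat]
    · simp; omega

lemma ancestor_iff_rtg : Ancestor G a b ↔ Relation.ReflTransGen G.dir a b := by
  constructor
  · rintro (rfl | ⟨p, hch, hnd, hh, hl, hlen⟩)
    · rfl
    · have hbm : b ∈ p := by
        have hne : p ≠ [] := by rintro rfl; simp at hlen
        rw [List.getLast?_eq_getLast hne] at hl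
        have := List.getLast_mem hne
        rwa [Option.some_injective _ hl] at this
      exact rtg_of_chain_mem hch hh hbm
  · intro h
    induction h with
    | refl => exact ancestor_refl
    | tail _ hbc ih => exact ancestor_snoc ih hbc

lemma ancestor_trans (h1 : Ancestor G a b) (h2 : Ancestor G b c) : Ancestor G a c := by
  rw [ancestor_iff_rtg] at *
  exact h1.trans h2

lemma ancestor_of_mem_dirpath {p : List V} (h : IsDirectedPath G p a b) (hc : c ∈ p) :
    Ancestor G a c :=
  ancestor_iff_rtg.mpr (rtg_of_chain_mem h.1 h.2.2.1 hc)

lemma exists_dirpath (h : Ancestor G a b) (hne : a ≠ b) : ∃ p, IsDirectedPath G p a b := by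
  rcases h with rfl | h
  · exact absurd rfl hne
  · exact h

lemma not_mem_dirpath {q : List V} {d : V} (hq : IsDirectedPath G q a b)
    (hnoout : ∀ v, ¬ G.dir d v) (hbd : b ≠ d) : d ∉ q := by
  intro hd
  obtain ⟨l1, l2, hdec⟩ := List.append_of_mem hd
  cases l2 with
  | nil =>
    have : q.getLast? = some d := by rw [hdec]; simp [List.getLast?_concat]
    rw [hq.2.2.2.1] at this
    exact hbd (Option.some_injective _ this)
  | cons z l2' =>
    have hch : List.Chain' G.dir (d :: z :: l2') := by
      have := hq.1
      rw [hdec] at this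
      exact (List.isChain_append.mp this).2.1
    exact hnoout z (List.isChain_cons_cons.mp hch).1

lemma no_intermediate_pair {w' : V} : ¬ IsIntermediateOn [a, b] w' := by
  rintro ⟨u, v, l1, l2, hdec⟩
  have := congrArg List.length hdec
  simp at this
  omega

end

section
open List

variable {V : Type*} {G : MixedGraph V} {a b c : V}

lemma adj_symm (h : G.adj a b) : G.adj b a := by
  rcases h with h | h | h
  · exact Or.inr (Or.inl h)
  · exact Or.inl h
  · exact Or.inr (Or.inr (G.bidir_symm _ _ h))

lemma not_arrowInto_of_dir (h : G.dir a b) : ¬ ArrowInto G b a := by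
  rintro (h' | h')
  · exact G.dir_not_dir a b h h'
  · exact G.dir_not_bidir a b h (G.bidir_symm _ _ h')

lemma mem_of_head? {l : List V} (h : l.head? = some a) : a ∈ l := by
  cases l with
  | nil => simp at h
  | cons u t => simp at h; subst h; exact List.mem_cons_self

lemma getLast?_take_eq {l : List V} {m : ℕ} (h : m < l.length) :
    (l.take (m+1)).getLast? = some (l[m]'h) := by
  rw [List.take_succ, List.getElem?_eq_getElem h]
  exact List.getLast?_concat

lemma isIntermediateOn_reverse_of {p : List V} {w : V} (h : IsIntermediateOn p w) :
    IsIntermediateOn p.reverse w := by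
  obtain ⟨u, v, l1, l2, rfl⟩ := h
  exact ⟨v, u, l2.reverse, l1.reverse, by simp⟩

lemma isIntermediateOn_reverse {p : List V} {w : V} :
    IsIntermediateOn p.reverse w ↔ IsIntermediateOn p w := by
  constructor
  · intro h
    simpa using isIntermediateOn_reverse_of h
  · exact isIntermediateOn_reverse_of

lemma isColliderOn_reverse_of {p : List V} {w : V} (h : IsColliderOn G p w) :
    IsColliderOn G p.reverse w := by
  obtain ⟨u, v, l1, l2, rfl, h1, h2⟩ := h
  exact ⟨v, u, l2.reverse, l1.reverse, by simp, h2, h1⟩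

lemma isColliderOn_reverse {p : List V} {w : V} :
    IsColliderOn G p.reverse w ↔ IsColliderOn G p w := by
  constructor
  · intro h
    simpa using isColliderOn_reverse_of h
  · exact isColliderOn_reverse_of

lemma isNonColliderOn_reverse {p : List V} {w : V} :
    IsNonColliderOn G p.reverse w ↔ IsNonColliderOn G p w := by
  unfold IsNonColliderOn
  rw [isIntermediateOn_reverse, isColliderOn_reverse]

lemma isPathBetween_reverse {p : List V} (h : IsPathBetween G p a b) :
    IsPathBetween G p.reverse b a := by
  obtain ⟨hch, hnd, hh, hl, hlen⟩ := h
  refine ⟨?_, by simpa using hnd, by simpa using hl, by simpa using hh, by simpa using hlen⟩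
  rw [List.Chain', List.isChain_reverse]
  exact hch.imp (fun a b hab => adj_symm hab) 

lemma mconnPath_reverse {Z : Set V} {p : List V} (h : MConnPath G Z p a b) :
    MConnPath G Z p.reverse b a := by
  obtain ⟨hp, ha, hb, hnc, hc⟩ := h
  refine ⟨isPathBetween_reverse hp, hb, ha, ?_, ?_⟩
  · intro w hw
    exact hnc w (isNonColliderOn_reverse.mp hw)
  · intro w hw
    exact hc w (isColliderOn_reverse.mp hw)

end

section
open List Classical

variable {V : Type*} {G : MixedGraph V}

lemma getElem_congr_idx {l : List V} {i j : ℕ} (hij : i = j) (hj : j < l.length) :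
    l[i]'(hij ▸ hj) = l[j]'hj := by subst hij; rfl

lemma glue_step {A B : V} {Z0 : Set V}
    {r : List V} (hr : IsPathBetween G r A B)
    {jstar : ℕ} (hj : jstar < r.length)
    (hcol : IsColliderOn G r (r[jstar]'hj))
    (hbad : ¬ ∃ d ∈ Z0, Ancestor G (r[jstar]'hj) d)
    (hanc : Ancestor G (r[jstar]'hj) B) :
    ∃ r2, IsPathBetween G r2 A B ∧
      (∀ w, IsNonColliderOn G r2 w → (w ∉ Z0 ∨ IsNonColliderOn G r w)) ∧
      (∀ w, IsColliderOn G r2 w → IsColliderOn G r w ∧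
        ∃ i, ∃ h2 : i + 2 < r2.length, ∃ hir : i + 1 < r.length,
          (r2[i+1]'(by omega)) = w ∧ (r[i+1]'hir) = w ∧ i + 1 < jstar) := by
  obtain ⟨hch, hnd, hh, hl, hlen⟩ := hr
  have hrne : r ≠ [] := by rintro rfl; simp at hlen
  have r0 : r[0]'(by omega) = A := getElem_zero hh (by omega)
  have rl : r[r.length - 1]'(by omega) = B := getElem_last hl (by omega)
  have hb := collider_idx_bounds hnd hj hcol
  have hcB : r[jstar]'hj ≠ B := by
    intro he
    rw [← rl] at he
    have := hnd.getElem_inj_iff.mp he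
    omega
  obtain ⟨q, hq⟩ := exists_dirpath hanc hcB
  have hqZ : ∀ z ∈ q, z ∉ Z0 := fun z hz hzZ =>
    hbad ⟨z, hzZ, ancestor_of_mem_dirpath hq hz⟩
  have hex : ∃ k, k ≤ jstar ∧ ∃ hk : k < r.length, (r[k]'hk) ∈ q :=
    ⟨jstar, le_rfl, hj, mem_of_head? hq.2.2.1⟩
  classical
  set m := Nat.find hex with hmdef
  obtain ⟨hmj, hmlt, hmemq⟩ := Nat.find_spec hex
  have hminq : ∀ k, k < m → ¬ (k ≤ jstar ∧ ∃ hk : k < r.length, (r[k]'hk) ∈ q) :=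
    fun k hk => Nat.find_min hex hk
  have hmlen : m + 1 < r.length := by omega
  obtain ⟨q1, q2, hqdec⟩ := List.append_of_mem hmemq
  have hqnd : q.Nodup := hq.2.1
  have hwq2 : r[m]'hmlt ∉ q2 := by
    have h' := hqnd
    rw [hqdec] at h'
    exact (List.nodup_cons.mp (List.nodup_append.mp h').2.1).1
  have hq2q : ∀ z ∈ q2, z ∈ q := by
    intro z hz; rw [hqdec]; exact List.mem_append_right _ (List.mem_cons_of_mem _ hz)
  have hchseg : List.Chain' G.dir (r[m]'hmlt :: q2) := by
    have h' := hq.1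
    rw [hqdec] at h'
    exact (List.isChain_append.mp h').2.1
  have hlastseg : (r[m]'hmlt :: q2).getLast? = some B := by
    have h' := hq.2.2.2.1
    rw [hqdec, List.getLast?_append] at h'
    rw [List.getLast?_eq_getLast (List.cons_ne_nil _ _)] at h' ⊢
    simpa using h'
  have hq2ne : q2 ≠ [] := by
    rintro rfl
    simp only [List.getLast?_singleton, Option.some_inj] at hlastseg
    rw [← rl] at hlastseg
    have := hnd.getElem_inj_iff.mp hlastseg
    omega
  have hq2pos : 0 < q2.length := List.length_pos_iff.mpr hq2ne
  have hndq2 : q2.Nodup := by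
    have h' := hqnd
    rw [hqdec] at h'
    exact (List.nodup_cons.mp (List.nodup_append.mp h').2.1).2
  have hchq2 : List.Chain' G.dir q2 := hchseg.tail
  have hlenTake : (r.take (m+1)).length = m + 1 := by
    rw [List.length_take]; omega
  have hlen2 : (r.take (m+1) ++ q2).length = m + 1 + q2.length := by
    rw [List.length_append, hlenTake]
  have hg1 : ∀ t (ht : t ≤ m), (r.take (m+1) ++ q2)[t]'(by omega) = r[t]'(by omega) := by
    intro t ht
    rw [List.getElem_append_left (show t < (r.take (m+1)).length by rw [hlenTake]; omega)]
    exact List.getElem_take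
  have hg2 : ∀ s (hs : s < q2.length), (r.take (m+1) ++ q2)[m+1+s]'(by omega) = q2[s]'hs := by
    intro s hs
    rw [List.getElem_append_right (by rw [hlenTake]; omega)]
    congr 1
    rw [hlenTake]
    omega
  have hjunc : G.dir (r[m]'hmlt) (q2[0]'hq2pos) := by
    have h' := chain'_getElem hchseg 0 (by simp [hq2pos])
    simpa using h'
  have hdisj : ∀ z ∈ r.take (m+1), z ∈ q2 → False := by
    intro z hz hz2
    obtain ⟨t, htl, hzt⟩ := List.mem_iff_getElem.mp hz
    have htm : t < m + 1 := by rw [hlenTake] at htl; omega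
    have hzr : r[t]'(by omega) = z := by
      rw [← hzt]; exact (List.getElem_take).symm
    rcases Nat.lt_or_ge t m with hlt | hge
    · exact hminq t hlt ⟨by omega, by omega, hzr ▸ hq2q z hz2⟩
    · have htm' : t = m := by omega
      subst htm'
      rw [← hzr] at hz2
      exact hwq2 hz2
  have hpath2 : IsPathBetween G (r.take (m+1) ++ q2) A B := by
    refine ⟨?_, ?_, ?_, ?_, ?_⟩
    · rw [List.Chain', List.isChain_append]
      refine ⟨hch.prefix (List.take_prefix _ _), hchq2.imp (fun a b hab => Or.inl hab), ?_⟩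
      intro u hu v hv
      rw [getLast?_take_eq hmlt] at hu
      have hu' : u = r[m]'hmlt := by simpa using hu.symm
      have hv' : v = q2[0]'hq2pos := by
        rw [head?_eq_getElem hq2ne] at hv
        simpa using hv.symm
      subst hu'; subst hv'
      exact Or.inl hjunc
    · rw [List.nodup_append]
      exact ⟨List.Nodup.sublist (List.take_sublist _ _) hnd, hndq2,
        fun z hz1 z' hz2 hzz => by subst hzz; exact hdisj z hz1 hz2⟩
    · rw [List.head?_append]
      have hne' : r.take (m+1) ≠ [] := by
        intro he
        have h' := congrArg List.length he
        rw [hlenTake] at h'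
        simp at h'
      rw [head?_eq_getElem hne']
      have he0 : (r.take (m+1))[0]'(List.length_pos_iff.mpr hne') = A := by
        rw [List.getElem_take]
        exact r0
      rw [he0]
      rfl
    · rw [List.getLast?_append]
      have hq2l : q2.getLast? = some B := by
        obtain ⟨z0, q2', rfl⟩ := List.exists_cons_of_ne_nil hq2ne
        rw [List.getLast?_cons_cons] at hlastseg
        exact hlastseg
      rw [hq2l]
      rfl
    · rw [hlen2]; omega
  refine ⟨r.take (m+1) ++ q2, hpath2, ?_, ?_⟩
  · -- noncolliders
    intro w hw
    obtain ⟨hint, hnc⟩ := hw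
    obtain ⟨i, h2, hwi⟩ := idx_of_isIntermediateOn hint
    rcases Nat.lt_trichotomy (i+1) m with hcase | hcase | hcase
    · -- prefix zone: noncollider on r
      right
      have e0 : (r.take (m+1) ++ q2)[i]'(by omega) = r[i]'(by omega) := hg1 i (by omega)
      have e1 : (r.take (m+1) ++ q2)[i+1]'(by omega) = r[i+1]'(by omega) := hg1 (i+1) (by omega)
      have e2 : (r.take (m+1) ++ q2)[i+2]'(by omega) = r[i+2]'(by omega) := hg1 (i+2) (by omega)
      have hv : r[i+1]'(by omega) = w := by rw [← e1]; exact hwi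
      have hint' : IsIntermediateOn r w := by
        have h' := isIntermediateOn_of_idx (p := r) (show i + 2 < r.length by omega)
        rwa [hv] at h'
      refine ⟨hint', ?_⟩
      intro hcr
      apply hnc
      rw [← hv] at hcr
      have harr := collider_arrows hnd (show i+2 < r.length by omega) hcr
      have hc2 : IsColliderOn G (r.take (m+1) ++ q2) ((r.take (m+1) ++ q2)[i+1]'(by omega)) :=
        isColliderOn_of_idx h2 (by rw [e0, e1]; exact harr.1) (by rw [e2, e1]; exact harr.2)
      rwa [hwi] at hc2
    · -- i+1 = m : w = r[m] ∈ q
      left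
      have e1 : (r.take (m+1) ++ q2)[i+1]'(by omega) = r[m]'hmlt :=
        (getElem_congr_idx (l := r.take (m+1) ++ q2) hcase (by omega)).trans (hg1 m le_rfl)
      have hwm : r[m]'hmlt = w := by rw [← e1]; exact hwi
      exact hqZ w (hwm ▸ hmemq)
    · -- q2 zone
      left
      have hs : i + 1 - (m+1) < q2.length := by omega
      have e1 : (r.take (m+1) ++ q2)[i+1]'(by omega) = q2[i+1-(m+1)]'hs :=
        (getElem_congr_idx (l := r.take (m+1) ++ q2)
          (show i+1 = m+1+(i+1-(m+1)) by omega) (by omega)).trans (hg2 _ hs)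
      have hwq : w ∈ q2 := by
        rw [← hwi, e1]
        exact List.getElem_mem _
      exact hqZ w (hq2q w hwq)
  · -- colliders
    intro w hw
    obtain ⟨i, h2, hwi, ha1, ha2⟩ := idx_of_isColliderOn hw
    rcases Nat.lt_trichotomy (i+1) m with hcase | hcase | hcase
    · -- prefix zone
      have e0 : (r.take (m+1) ++ q2)[i]'(by omega) = r[i]'(by omega) := hg1 i (by omega)
      have e1 : (r.take (m+1) ++ q2)[i+1]'(by omega) = r[i+1]'(by omega) := hg1 (i+1) (by omega)
      have e2 : (r.take (m+1) ++ q2)[i+2]'(by omega) = r[i+2]'(by omega) := hg1 (i+2) (by omega)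
      have hv : r[i+1]'(by omega) = w := by rw [← e1]; exact hwi
      have hcr : IsColliderOn G r (r[i+1]'(by omega)) :=
        isColliderOn_of_idx (show i+2 < r.length by omega)
          (by rw [e0] at ha1; rw [hv]; exact ha1) (by rw [e2] at ha2; rw [hv]; exact ha2)
      rw [hv] at hcr
      exact ⟨hcr, i, h2, by omega, hwi, hv, by omega⟩
    · -- i+1 = m: contradiction via junction edge
      exfalso
      have e1 : (r.take (m+1) ++ q2)[i+1]'(by omega) = r[m]'hmlt :=
        (getElem_congr_idx (l := r.take (m+1) ++ q2) hcase (by omega)).trans (hg1 m le_rfl)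
      have e2 : (r.take (m+1) ++ q2)[i+2]'(by omega) = q2[0]'hq2pos :=
        (getElem_congr_idx (l := r.take (m+1) ++ q2)
          (show i+2 = m+1+0 by omega) (by omega)).trans (hg2 0 hq2pos)
      rw [← hwi, e1] at ha2
      rw [e2] at ha2
      exact not_arrowInto_of_dir hjunc ha2
    · -- q2 zone: contradiction via directed chain in q2
      exfalso
      have hs : i - m < q2.length := by omega
      have hs1 : i - m + 1 < q2.length := by omega
      have e1 : (r.take (m+1) ++ q2)[i+1]'(by omega) = q2[i-m]'hs :=
        (getElem_congr_idx (l := r.take (m+1) ++ q2)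
          (show i+1 = m+1+(i-m) by omega) (by omega)).trans (hg2 _ hs)
      have e2 : (r.take (m+1) ++ q2)[i+2]'(by omega) = q2[i-m+1]'hs1 :=
        (getElem_congr_idx (l := r.take (m+1) ++ q2)
          (show i+2 = m+1+(i-m+1) by omega) (by omega)).trans (hg2 _ hs1)
      have hdir : G.dir (q2[i-m]'hs) (q2[i-m+1]'hs1) := chain'_getElem hchq2 _ hs1
      rw [← hwi, e1] at ha2
      rw [e2] at ha2
      exact not_arrowInto_of_dir hdir ha2

end

section
open List Classical

variable {V : Type*} {G : MixedGraph V}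

lemma reroute {S y : V} {Z0 : Set V} (hS0 : S ∉ Z0) (hy0 : y ∉ Z0) :
    ∀ (J : ℕ) (r : List V), IsPathBetween G r S y →
      (∀ w, IsNonColliderOn G r w → w ∉ Z0) →
      (∀ w, IsColliderOn G r w →
        (∃ d ∈ Z0, Ancestor G w d) ∨ Ancestor G w S ∨ Ancestor G w y) →
      (∀ j (hj : j < r.length), IsColliderOn G r (r[j]'hj) →
        ¬ (∃ d ∈ Z0, Ancestor G (r[j]'hj) d) → j ≤ J) →
      MConn G Z0 S y := by
  intro J
  induction J with
  | zero =>
    intro r hr hnc hinv hbd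
    refine ⟨r, hr, hS0, hy0, hnc, ?_⟩
    intro w hw
    by_contra hbadw
    obtain ⟨t, ht, hwt, -, -⟩ := idx_of_isColliderOn hw
    have hcw : IsColliderOn G r (r[t+1]'(by omega)) := by rw [hwt]; exact hw
    have hbw : ¬ (∃ d ∈ Z0, Ancestor G (r[t+1]'(by omega)) d) := by rw [hwt]; exact hbadw
    have := hbd (t+1) (by omega) hcw hbw
    omega
  | succ J ih =>
    intro r hr hnc hinv hbd
    by_cases hallgood : ∀ w, IsColliderOn G r w → ∃ d ∈ Z0, Ancestor G w d
    · exact ⟨r, hr, hS0, hy0, hnc, hallgood⟩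
    push_neg at hallgood
    obtain ⟨w0, hw0c, hw0bad'⟩ := hallgood
    have hw0bad : ¬ ∃ d ∈ Z0, Ancestor G w0 d := by push_neg; exact hw0bad'
    obtain ⟨t0, ht0, hwt0, -, -⟩ := idx_of_isColliderOn hw0c
    classical
    set P : ℕ → Prop := fun j => ∃ hj : j < r.length,
      IsColliderOn G r (r[j]'hj) ∧ ¬ ∃ d ∈ Z0, Ancestor G (r[j]'hj) d with hPdef
    have hPt0 : P (t0+1) := ⟨by omega, by rw [hwt0]; exact hw0c, by rw [hwt0]; exact hw0bad⟩
    have hPstar : P (Nat.findGreatest P r.length) :=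
      Nat.findGreatest_spec (by omega) hPt0
    set jstar := Nat.findGreatest P r.length with hjsdef
    obtain ⟨hjlt, hcstar, hbadstar⟩ := hPstar
    have hmax : ∀ k (hk : k < r.length), jstar < k →
        IsColliderOn G r (r[k]'hk) → ∃ d ∈ Z0, Ancestor G (r[k]'hk) d := by
      intro k hk hlt hck
      by_contra hbb
      exact Nat.findGreatest_is_greatest hlt (by omega) ⟨hk, hck, hbb⟩
    have hJ1 : jstar ≤ J + 1 := hbd jstar hjlt hcstar hbadstar
    have hancSy := (hinv _ hcstar).resolve_left hbadstar
    obtain ⟨hch, hnd, hh, hl, hlen⟩ := hr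
    have hr' : IsPathBetween G r S y := ⟨hch, hnd, hh, hl, hlen⟩
    have hbnd := collider_idx_bounds hnd hjlt hcstar
    rcases hancSy with hancS | hancy
    · -- glue on the reversed path toward S; result has only good colliders
      have hrr : IsPathBetween G r.reverse y S := isPathBetween_reverse hr'
      have hlenrev : r.reverse.length = r.length := by simp
      have hjr : r.length - 1 - jstar < r.reverse.length := by omega
      have hrev : r.reverse[r.length - 1 - jstar]'hjr = r[jstar]'hjlt := by
        rw [List.getElem_reverse]
        exact getElem_congr_idx (by omega) hjlt
      have hcolr : IsColliderOn G r.reverse (r.reverse[r.length - 1 - jstar]'hjr) := by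
        rw [hrev]
        exact isColliderOn_reverse_of hcstar
      have hbadr : ¬ ∃ d ∈ Z0, Ancestor G (r.reverse[r.length - 1 - jstar]'hjr) d := by
        rw [hrev]; exact hbadstar
      have hancr : Ancestor G (r.reverse[r.length - 1 - jstar]'hjr) S := by
        rw [hrev]; exact hancS
      obtain ⟨r2, hp2, hnc2, hc2⟩ := glue_step hrr hjr hcolr hbadr hancr
      refine ⟨r2.reverse, mconnPath_reverse ⟨hp2, hy0, hS0, ?_, ?_⟩⟩
      · intro w hw
        rcases hnc2 w hw with h | h
        · exact h
        · exact hnc w (isNonColliderOn_reverse.mp h)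
      · intro w hw
        obtain ⟨hwcolrev, i, h2, hir, hwi2, hwr, hilt⟩ := hc2 w hw
        rw [List.getElem_reverse] at hwr
        have hk : r.length - 1 - (i+1) < r.length := by omega
        have hkgt : jstar < r.length - 1 - (i+1) := by
          rw [hlenrev] at hir
          omega
        have hgood := hmax _ hk hkgt (by rw [hwr]; exact isColliderOn_reverse.mp hwcolrev)
        rwa [hwr] at hgood
    · -- glue toward y and recurse
      obtain ⟨r2, hp2, hnc2, hc2⟩ := glue_step hr' hjlt hcstar hbadstar hancy
      apply ih r2 hp2
      · intro w hw
        rcases hnc2 w hw with h | h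
        · exact h
        · exact hnc w h
      · intro w hw
        exact hinv w (hc2 w hw).1
      · intro j hj2 hcj hbadj
        obtain ⟨-, i, h2, hir, hwi2, -, hilt⟩ := hc2 _ hcj
        have hji : i + 1 = j := hp2.2.1.getElem_inj_iff.mp hwi2
        omega

end

section
open List Classical

variable {V : Type*} {G : MixedGraph V} {x y S : V}

/-- Center-based variants of the idx lemmas. -/
lemma isIntermediateOn_of_idx' {p : List V} {j : ℕ} (h1 : 1 ≤ j) (h2 : j + 1 < p.length) :
    IsIntermediateOn p (p[j]'(by omega)) := by
  have e : p[(j-1)+1]'(by omega) = p[j]'(by omega) := getElem_congr_idx (by omega) (by omega)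
  rw [← e]
  exact isIntermediateOn_of_idx (by omega)

lemma isColliderOn_of_idx' {p : List V} {j : ℕ} (h1 : 1 ≤ j) (h2 : j + 1 < p.length)
    (ha : ArrowInto G (p[j-1]'(by omega)) (p[j]'(by omega)))
    (hb : ArrowInto G (p[j+1]'h2) (p[j]'(by omega))) :
    IsColliderOn G p (p[j]'(by omega)) := by
  have e : p[(j-1)+1]'(by omega) = p[j]'(by omega) := getElem_congr_idx (by omega) (by omega)
  have e2 : p[(j-1)+2]'(by omega) = p[j+1]'h2 := getElem_congr_idx (by omega) h2
  rw [← e]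
  exact isColliderOn_of_idx (by omega) (by rw [e]; exact ha) (by rw [e, e2]; exact hb)

lemma collider_arrows' {p : List V} (hnd : p.Nodup) {j : ℕ} (h1 : 1 ≤ j)
    (h2 : j + 1 < p.length) (hc : IsColliderOn G p (p[j]'(by omega))) :
    ArrowInto G (p[j-1]'(by omega)) (p[j]'(by omega)) ∧
      ArrowInto G (p[j+1]'h2) (p[j]'(by omega)) := by
  have e : p[(j-1)+1]'(by omega) = p[j]'(by omega) := getElem_congr_idx (by omega) (by omega)
  have e2 : p[(j-1)+2]'(by omega) = p[j+1]'h2 := getElem_congr_idx (by omega) h2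
  have := collider_arrows hnd (show (j-1) + 2 < p.length by omega) (by rw [e]; exact hc)
  rwa [e, e2] at this

/-! ### pretreatment helpers -/

lemma cover_cases {O : Set V} (h : Pretreatment G x y O) (v : V) :
    v = x ∨ v = y ∨ v ∈ O := by
  have hv : v ∈ (Set.univ : Set V) := trivial
  rw [h.cover] at hv
  rcases hv with (h1 | h1) | h1
  · exact Or.inl h1
  · exact Or.inr (Or.inl h1)
  · exact Or.inr (Or.inr h1)

lemma no_out_y {O : Set V} (h : Pretreatment G x y O) : ∀ v, ¬ G.dir y v := by
  intro v hd
  rcases cover_cases h v with rfl | rfl | hvO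
  · exact h.y_not_anc_x (ancestor_of_dir hd)
  · exact G.dir_irrefl _ hd
  · exact h.y_not_anc_O v hvO (ancestor_of_dir hd)

lemma no_out_x {O : Set V} (h : Pretreatment G x y O) (hbi : G.bidir x y) :
    ∀ v, ¬ G.dir x v := by
  intro v hd
  rcases cover_cases h v with rfl | rfl | hvO
  · exact G.dir_irrefl _ hd
  · exact G.dir_not_bidir _ _ hd hbi
  · exact h.x_not_anc_O v hvO (ancestor_of_dir hd)

lemma anc_x_eq (hnox : ∀ v, ¬ G.dir x v) {d : V} (had : Ancestor G x d) : d = x := by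
  rcases had with rfl | ⟨p, hch, hnd, hh, hl, hlen⟩
  · rfl
  exfalso
  cases p with
  | nil => simp at hh
  | cons u t =>
    have hu : u = x := by simpa using hh
    subst hu
    cases t with
    | nil => simp at hlen
    | cons z t' => exact hnox z (List.isChain_cons_cons.mp hch).1

/-- The separating set used in the shielded-collider case. -/
def ZSet (G : MixedGraph V) (S x y : V) : Set V :=
  {v | v ≠ S ∧ v ≠ x ∧ v ≠ y ∧ ∃ q, IsColliderPathBetween G q v y ∧
    ∀ w ∈ q, Ancestor G w S ∨ Ancestor G w y}

lemma zset_anc {z : V} (hz : z ∈ ZSet G S x y) : Ancestor G z S ∨ Ancestor G z y := by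
  obtain ⟨-, -, -, q, hq, hall⟩ := hz
  exact hall z (mem_of_head? hq.1.2.2.1)

end

section
open List Classical

variable {V : Type*} {G : MixedGraph V}

lemma sep_main {x y S : V} {O : Set V} (h : Pretreatment G x y O) (hbi : G.bidir x y)
    (hSx : S ≠ x) (hSyne : S ≠ y) (hSy : ¬ G.adj S y) :
    MSep G (ZSet G S x y) S y := by
  intro p hconn
  obtain ⟨⟨hch, hnd, hh, hl, hlen⟩, hSZ, hyZ, hnonc, hcolZ⟩ := hconn
  have hpne : p ≠ [] := by rintro rfl; simp at hlen
  have p0 : p[0]'(by omega) = S := getElem_zero hh (by omega)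
  have plast : p[p.length - 1]'(by omega) = y := getElem_last hl (by omega)
  have hnoy := no_out_y h
  have hnox := no_out_x h hbi
  have hadj : ∀ i (hi : i + 1 < p.length),
      G.adj (p[i]'(by omega)) (p[i+1]'hi) := fun i hi => chain'_getElem hch i hi
  have hL3 : 3 ≤ p.length := by
    by_contra hL
    have hL2 : p.length = 2 := by omega
    have := hadj 0 (by omega)
    rw [p0] at this
    have e : p[1]'(by omega) = y := by
      rw [← plast]
      exact getElem_congr_idx (by omega) (by omega)
    rw [e] at this
    exact hSy this
  -- x as an intermediate vertex is impossible
  have hXINT : ∀ i (h1 : 1 ≤ i) (h2 : i + 1 < p.length), p[i]'(by omega) = x → False := by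
    intro i h1 h2 hx
    have e : p[(i-1)+1]'(by omega) = p[i]'(by omega) := getElem_congr_idx (by omega) (by omega)
    have hadj1 : G.adj (p[i-1]'(by omega)) (p[i]'(by omega)) := by
      have := hadj (i-1) (by omega)
      rwa [e] at this
    have hadj2 := hadj i h2
    have harr1 : ArrowInto G (p[i-1]'(by omega)) (p[i]'(by omega)) := by
      rcases hadj1 with hd | hd | hd
      · exact Or.inl hd
      · exact absurd hd (by rw [hx]; exact hnox _)
      · exact Or.inr hd
    have harr2 : ArrowInto G (p[i+1]'h2) (p[i]'(by omega)) := by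
      rcases hadj2 with hd | hd | hd
      · exact absurd hd (by rw [hx]; exact hnox _)
      · exact Or.inl hd
      · exact Or.inr (G.bidir_symm _ _ hd)
    have hcolx : IsColliderOn G p (p[i]'(by omega)) :=
      isColliderOn_of_idx' h1 h2 harr1 harr2
    obtain ⟨d, hdZ, had⟩ := hcolZ _ hcolx
    rw [hx] at had
    have := anc_x_eq hnox had
    subst this
    exact hdZ.2.1 rfl
  -- membership builder for ZSet
  have hZmem : ∀ i (h1 : 1 ≤ i) (h2 : i + 1 < p.length),
      p[i]'(by omega) ≠ x →
      (∀ j (hj : j + 1 < p.length), i < j → IsColliderOn G p (p[j]'(by omega))) →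
      (∀ j (hj : j + 1 < p.length), i ≤ j →
        Ancestor G (p[j]'(by omega)) S ∨ Ancestor G (p[j]'(by omega)) y) →
      p[i]'(by omega) ∈ ZSet G S x y := by
    intro i h1 h2 hxne hcols hancs
    have hdlen : (p.drop i).length = p.length - i := by simp
    refine ⟨?_, hxne, ?_, p.drop i, ⟨⟨?_, ?_, ?_, ?_, ?_⟩, ?_⟩, ?_⟩
    · intro he
      rw [← p0] at he
      have := hnd.getElem_inj_iff.mp he
      omega
    · intro he
      rw [← plast] at he
      have := hnd.getElem_inj_iff.mp he
      omega
    · exact chain'_of_getElem (fun t ht => by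
        have e1 : (p.drop i)[t]'(by omega) = p[i+t]'(by omega) := List.getElem_drop
        have e2 : (p.drop i)[t+1]'ht = p[i+(t+1)]'(by omega) := List.getElem_drop
        rw [e1, e2]
        have := hadj (i+t) (by omega)
        have e3 : p[i+t+1]'(by omega) = p[i+(t+1)]'(by omega) :=
          getElem_congr_idx (by omega) (by omega)
        rwa [e3] at this)
    · exact List.Nodup.sublist (List.drop_sublist _ _) hnd
    · rw [List.drop_eq_getElem_cons (by omega : i < p.length)]
      rfl
    · have hdne : p.drop i ≠ [] := by
        intro he
        have := congrArg List.length he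
        rw [hdlen] at this
        simp at this
        omega
      obtain ⟨b', hb'⟩ : ∃ b', (p.drop i).getLast? = some b' :=
        ⟨_, List.getLast?_eq_getLast hdne⟩
      have hl' := hl
      rw [← List.take_append_drop i p, List.getLast?_append, hb'] at hl'
      simp at hl'
      rw [hb', hl']
    · rw [hdlen]; omega
    · -- intermediates of the suffix are colliders
      intro w hint
      obtain ⟨t, ht2, hwt⟩ := idx_of_isIntermediateOn hint
      rw [hdlen] at ht2
      have e1 : (p.drop i)[t+1]'(by rw [hdlen]; omega) = p[i+(t+1)]'(by omega) :=
        List.getElem_drop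
      have hj : i + (t+1) + 1 < p.length := by omega
      have hcolp : IsColliderOn G p (p[i+(t+1)]'(by omega)) :=
        hcols (i+(t+1)) hj (by omega)
      have harr := collider_arrows' hnd (by omega) hj hcolp
      have ea : (p.drop i)[t]'(by rw [hdlen]; omega) = p[i+t]'(by omega) :=
        List.getElem_drop
      have eb : (p.drop i)[t+2]'(by rw [hdlen]; omega) = p[i+(t+2)]'(by omega) :=
        List.getElem_drop
      have ea' : p[i+t]'(by omega) = p[i+(t+1)-1]'(by omega) :=
        getElem_congr_idx (by omega) (by omega)
      have eb' : p[i+(t+2)]'(by omega) = p[i+(t+1)+1]'hj :=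
        getElem_congr_idx (by omega) (by omega)
      have hcold : IsColliderOn G (p.drop i) ((p.drop i)[t+1]'(by rw [hdlen]; omega)) := by
        refine isColliderOn_of_idx (by rw [hdlen]; omega) ?_ ?_
        · rw [ea, ea', e1]; exact harr.1
        · rw [eb, eb', e1]; exact harr.2
      rwa [← hwt]
    · -- ancestry condition along the suffix
      intro w hw
      obtain ⟨t, htl, hwt⟩ := List.mem_iff_getElem.mp hw
      rw [hdlen] at htl
      have e1 : (p.drop i)[t]'(by rw [hdlen]; omega) = p[i+t]'(by omega) :=
        List.getElem_drop
      rcases Nat.lt_or_ge (i + t + 1) p.length with hlt | hge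
      · have := hancs (i+t) hlt (by omega)
        rwa [← e1, hwt] at this
      · have he : i + t = p.length - 1 := by omega
        right
        have : p[i+t]'(by omega) = y := by
          rw [← plast]
          exact getElem_congr_idx he (by omega)
        rw [← hwt, e1, this]
        exact ancestor_refl
  -- the cascade lemma
  have hcasc : ∀ j (hj : j + 1 < p.length) (v : V),
      G.dir (p[j+1]'hj) (p[j]'(by omega)) → Ancestor G v (p[j+1]'hj) →
      Ancestor G v S ∨ Ancestor G v y := by
    intro j
    induction j with
    | zero =>
      intro hj v hdir hanc
      left
      rw [← p0]
      exact ancestor_snoc hanc hdir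
    | succ j ih =>
      intro hj v hdir hanc
      have hv1 : Ancestor G v (p[j+1]'(by omega)) := ancestor_snoc hanc hdir
      by_cases hxj : p[j+1]'(by omega) = x
      · exact absurd hxj (by intro hx; exact hXINT (j+1) (by omega) (by omega) hx)
      by_cases hcolj : IsColliderOn G p (p[j+1]'(by omega))
      · obtain ⟨d, hdZ, had⟩ := hcolZ _ hcolj
        rcases zset_anc hdZ with hz | hz
        · exact Or.inl (ancestor_trans hv1 (ancestor_trans had hz))
        · exact Or.inr (ancestor_trans hv1 (ancestor_trans had hz))
      · have hnotleft : ¬ ArrowInto G (p[j]'(by omega)) (p[j+1]'(by omega)) := by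
          intro hA
          exact hcolj (isColliderOn_of_idx (by omega) hA (Or.inl hdir))
        have hdirL : G.dir (p[j+1]'(by omega)) (p[j]'(by omega)) := by
          rcases hadj j (by omega) with hd | hd | hd
          · exact absurd (Or.inl hd) hnotleft
          · exact hd
          · exact absurd (Or.inr hd) hnotleft
        exact ih (by omega) v hdirL hv1
  -- the main downward induction
  have hmain : ∀ k i, i + k + 2 = p.length → 1 ≤ i →
      ∀ j (hj : j + 1 < p.length), i ≤ j →
        IsColliderOn G p (p[j]'(by omega)) ∧
          (Ancestor G (p[j]'(by omega)) S ∨ Ancestor G (p[j]'(by omega)) y) := by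
    intro k
    induction k with
    | zero =>
      intro i hik h1 j hj hij
      have hji : j = i := by omega
      subst hji
      -- base case: j = i = p.length - 2
      have hyi : p[j+1]'hj = y := by
        rw [← plast]
        exact getElem_congr_idx (by omega) (by omega)
      have hadji := hadj j hj
      rw [hyi] at hadji
      rcases hadji with hd | hd | hd
      · -- p[j] → y : p[j] ∈ Z and a non-collider: contradiction
        exfalso
        have hxne : p[j]'(by omega) ≠ x := by
          intro hx
          rw [hx] at hd
          exact G.dir_not_bidir _ _ hd hbi
        have hncol : ¬ IsColliderOn G p (p[j]'(by omega)) := by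
          intro hc
          have harr := (collider_arrows' hnd h1 hj hc).2
          rw [hyi] at harr
          rcases harr with hdd | hdd
          · exact hnoy _ hdd
          · exact G.dir_not_bidir _ _ hd (G.bidir_symm _ _ hdd)
        have hmem : p[j]'(by omega) ∈ ZSet G S x y := by
          refine hZmem j h1 hj hxne (fun j' hj' hlt => by omega) ?_
          intro j' hj' hij'
          have hji' : j' = j := by omega
          subst hji'
          exact Or.inr (ancestor_of_dir hd)
        exact hnonc _ ⟨isIntermediateOn_of_idx' h1 hj, hncol⟩ hmem
      · exact absurd hd (hnoy _)
      · -- p[j] ↔ y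
        have hxne : p[j]'(by omega) ≠ x := by
          intro hx; exact hXINT j h1 hj hx
        by_cases hcolj : IsColliderOn G p (p[j]'(by omega))
        · refine ⟨hcolj, ?_⟩
          obtain ⟨d, hdZ, had⟩ := hcolZ _ hcolj
          rcases zset_anc hdZ with hz | hz
          · exact Or.inl (ancestor_trans had hz)
          · exact Or.inr (ancestor_trans had hz)
        · exfalso
          have harrR : ArrowInto G (p[j+1]'hj) (p[j]'(by omega)) := by
            rw [hyi]
            exact Or.inr (G.bidir_symm _ _ hd)
          have hnotleft : ¬ ArrowInto G (p[j-1]'(by omega)) (p[j]'(by omega)) := by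
            intro hA
            exact hcolj (isColliderOn_of_idx' h1 hj hA harrR)
          have e : p[(j-1)+1]'(by omega) = p[j]'(by omega) :=
            getElem_congr_idx (by omega) (by omega)
          have hdirL : G.dir (p[j]'(by omega)) (p[j-1]'(by omega)) := by
            have hadj0 := hadj (j-1) (by omega)
            rw [e] at hadj0
            rcases hadj0 with hdd | hdd | hdd
            · exact absurd (Or.inl hdd) hnotleft
            · exact hdd
            · exact absurd (Or.inr hdd) hnotleft
          have hcas : Ancestor G (p[j]'(by omega)) S ∨ Ancestor G (p[j]'(by omega)) y := by
            refine hcasc (j-1) (by omega) _ ?_ ?_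
            · rw [e]; exact hdirL
            · rw [e]; exact ancestor_refl
          have hmem : p[j]'(by omega) ∈ ZSet G S x y := by
            refine hZmem j h1 hj hxne (fun j' hj' hlt => by omega) ?_
            intro j' hj' hij'
            have hji' : j' = j := by omega
            subst hji'
            exact hcas
          exact hnonc _ ⟨isIntermediateOn_of_idx' h1 hj, hcolj⟩ hmem
    | succ k ih =>
      intro i hik h1 j hj hij
      have hnext := ih (i+1) (by omega) (by omega)
      by_cases hltc : i < j
      · exact hnext j hj hltc
      have heq : j = i := by omega
      subst heq
      -- j = i case
      have hj2 : j + 2 < p.length := by omega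
      have hci1 := hnext (j+1) (by omega) le_rfl
      have harr := collider_arrows hnd hj2 hci1.1
      by_cases hxne : p[j]'(by omega) = x
      · exact absurd hxne (fun hx => hXINT j h1 (by omega) hx)
      by_cases hcolj : IsColliderOn G p (p[j]'(by omega))
      · refine ⟨hcolj, ?_⟩
        obtain ⟨d, hdZ, had⟩ := hcolZ _ hcolj
        rcases zset_anc hdZ with hz | hz
        · exact Or.inl (ancestor_trans had hz)
        · exact Or.inr (ancestor_trans had hz)
      · exfalso
        have hanci : Ancestor G (p[j]'(by omega)) S ∨ Ancestor G (p[j]'(by omega)) y := by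
          by_cases hAr : ArrowInto G (p[j+1]'(by omega)) (p[j]'(by omega))
          · -- left tail forced: cascade
            have hnotleft : ¬ ArrowInto G (p[j-1]'(by omega)) (p[j]'(by omega)) := by
              intro hA
              exact hcolj (isColliderOn_of_idx' h1 (by omega) hA hAr)
            have e : p[(j-1)+1]'(by omega) = p[j]'(by omega) :=
              getElem_congr_idx (by omega) (by omega)
            have hdirL : G.dir (p[j]'(by omega)) (p[j-1]'(by omega)) := by
              have hadj0 := hadj (j-1) (by omega)
              rw [e] at hadj0
              rcases hadj0 with hdd | hdd | hdd
              · exact absurd (Or.inl hdd) hnotleft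
              · exact hdd
              · exact absurd (Or.inr hdd) hnotleft
            refine hcasc (j-1) (by omega) _ ?_ ?_
            · rw [e]; exact hdirL
            · rw [e]; exact ancestor_refl
          · -- right tail: p[j] → p[j+1]
            have hdirR : G.dir (p[j]'(by omega)) (p[j+1]'(by omega)) := by
              rcases hadj j (by omega) with hdd | hdd | hdd
              · exact hdd
              · exact absurd (Or.inl hdd) hAr
              · exact absurd (Or.inr (G.bidir_symm _ _ hdd)) hAr
            have hanc1 : Ancestor G (p[j]'(by omega)) (p[j+1]'(by omega)) :=
              ancestor_of_dir hdirR
            rcases hci1.2 with hz | hz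
            · exact Or.inl (ancestor_trans hanc1 hz)
            · exact Or.inr (ancestor_trans hanc1 hz)
        have hmem : p[j]'(by omega) ∈ ZSet G S x y := by
          refine hZmem j h1 (by omega) hxne ?_ ?_
          · intro j' hj' hlt'
            exact (hnext j' hj' (by omega)).1
          · intro j' hj' hij'
            rcases Nat.eq_or_lt_of_le hij' with rfl | hlt'
            · exact hanci
            · exact (hnext j' hj' hlt').2
        exact hnonc _ ⟨isIntermediateOn_of_idx' h1 (by omega), hcolj⟩ hmem
  -- conclude: every intermediate vertex is a collider with the ancestry property
  have hsuf := hmain (p.length - 3) 1 (by omega) le_rfl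
  -- endgame via maximality and rerouting
  obtain ⟨Z0, hS0, hy0, hsep⟩ := h.mag.2.2 S y hSyne hSy
  have hconn0 : MConn G Z0 S y := by
    refine reroute hS0 hy0 p.length p ⟨hch, hnd, hh, hl, hlen⟩ ?_ ?_ ?_
    · intro w hw
      obtain ⟨hint, hncw⟩ := hw
      obtain ⟨t, ht2, hwt⟩ := idx_of_isIntermediateOn hint
      have := (hsuf (t+1) (by omega) (by omega)).1
      rw [hwt] at this
      exact absurd this hncw
    · intro w hw
      obtain ⟨t, ht2, hwt, -, -⟩ := idx_of_isColliderOn hw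
      have := (hsuf (t+1) (by omega) (by omega)).2
      rw [hwt] at this
      exact Or.inr this
    · intro j hj hcj hbadj
      omega
  obtain ⟨p', hp'⟩ := hconn0
  exact hsep p' hp'

end


/-- Shielded-collider case in Scenario 2 of the proof of Theorem 4
(necessity of rule R2(ii)): if there is a discriminating path
`⟨S, W₁, …, W_k, x, y⟩` for `x` (with `k ≥ 1`, `S` not adjacent to `y`, and
every `Wᵢ` a collider on the path and a parent of `y`), then rule R2(ii)
applies. -/


theorem rule_R2_necessary_shielded
    {V : Type*} [Fintype V] (G : MixedGraph V) (x y : V) (O : Set V)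
    (h : Pretreatment G x y O) (hbi : G.bidir x y)
    (S : V) (ws : List V) (hws : ws ≠ [])
    (hpath : IsPathBetween G (S :: ws ++ [x, y]) S y)
    (hSy : ¬ G.adj S y)
    (hcoll : ∀ w ∈ ws, IsColliderOn G (S :: ws ++ [x, y]) w ∧ G.dir w y) :
    ∃ Z ⊆ MarkovBlanket G y \ {x}, S ∉ Z ∧ MConn G Z S x ∧ MSep G Z S y := by
  obtain ⟨hch, hnd, hh, hl, hlen⟩ := hpath
  have hSnotin : S ∉ ws ++ [x, y] := (List.nodup_cons.mp hnd).1
  have hSx : S ≠ x := fun he => hSnotin (by rw [he]; simp)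
  have hSyne : S ≠ y := fun he => hSnotin (by rw [he]; simp)
  have hnd' : (ws ++ [x, y]).Nodup := (List.nodup_cons.mp hnd).2
  have hdisj := (List.nodup_append.mp hnd').2.2
  have hxws : x ∉ ws := fun hx => hdisj x hx x (by simp) rfl
  have hyws : y ∉ ws := fun hy => hdisj y hy y (by simp) rfl
  have hwsZ : ∀ w ∈ ws, w ∈ ZSet G S x y := by
    intro w hin
    obtain ⟨hwc, hwd⟩ := hcoll w hin
    have hwS : w ≠ S := fun he => hSnotin (he ▸ List.mem_append_left _ hin)
    have hwx : w ≠ x := fun he => hxws (he ▸ hin)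
    have hwy : w ≠ y := fun he => hyws (he ▸ hin)
    refine ⟨hwS, hwx, hwy, [w, y], ⟨⟨?_, ?_, rfl, rfl, by simp⟩, ?_⟩, ?_⟩
    · exact List.isChain_cons_cons.mpr ⟨Or.inl hwd, List.isChain_singleton _⟩
    · simp [hwy]
    · intro w' hint
      exact absurd hint no_intermediate_pair
    · intro z hz
      rcases List.mem_cons.mp hz with rfl | hz'
      · exact Or.inr (ancestor_of_dir hwd)
      · simp at hz'
        subst hz'
        exact Or.inr ancestor_refl
  refine ⟨ZSet G S x y, ?_, fun hS => hS.1 rfl, ?_, sep_main h hbi hSx hSyne hSy⟩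
  · -- ZSet ⊆ MarkovBlanket \ {x}
    intro z hz
    obtain ⟨hzS, hzx, hzy, q, hq, hall⟩ := hz
    refine ⟨⟨hzy, ?_⟩, by simpa using hzx⟩
    by_cases hadjz : G.adj z y
    · exact Or.inl hadjz
    · exact Or.inr ⟨hadjz, q, hq⟩
  · -- m-connection of S and x given ZSet via the path S :: ws ++ [x]
    have hpp : S :: ws ++ [x, y] = (S :: ws ++ [x]) ++ [y] := by simp
    have hlen1 : (S :: ws ++ [x]).length = ws.length + 2 := by simp
    have hlenp : (S :: ws ++ [x, y]).length = ws.length + 3 := by simp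
    have hg : ∀ t (ht : t < ws.length + 2),
        (S :: ws ++ [x, y])[t]'(by rw [hlenp]; omega) = (S :: ws ++ [x])[t]'(by rw [hlen1]; omega) := by
      intro t ht
      rw [List.getElem_of_eq hpp]
      exact List.getElem_append_left (by rw [hlen1]; omega)
    have hmid : ∀ t (ht : t < ws.length), (S :: ws ++ [x])[t+1]'(by rw [hlen1]; omega) ∈ ws := by
      intro t ht
      have e1 : (S :: ws ++ [x])[t+1]'(by rw [hlen1]; omega) = (ws ++ [x])[t]'(by simp; omega) :=
        List.getElem_cons_succ ..
      rw [e1, List.getElem_append_left (by omega)]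
      exact List.getElem_mem _
    refine ⟨S :: ws ++ [x], ⟨?_, ?_, rfl, ?_, by rw [hlen1]; omega⟩,
      fun hS => hS.1 rfl, fun hx => hx.2.1 rfl, ?_, ?_⟩
    · have hch' := hch
      rw [hpp] at hch'
      exact (List.isChain_append.mp hch').1
    · refine List.Nodup.sublist ?_ hnd
      rw [hpp]
      exact List.sublist_append_left _ _
    · exact (show ((S :: ws) ++ [x]).getLast? = some x from List.getLast?_concat)
    · -- no intermediate vertex is a non-collider
      intro w hw
      obtain ⟨hint, hnc⟩ := hw
      exfalso
      obtain ⟨t, ht2, hwt⟩ := idx_of_isIntermediateOn hint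
      rw [hlen1] at ht2
      have htw : t < ws.length := by omega
      have hin : w ∈ ws := by rw [← hwt]; exact hmid t htw
      obtain ⟨hwc, -⟩ := hcoll w hin
      have hpw : (S :: ws ++ [x, y])[t+1]'(by rw [hlenp]; omega) = w := by
        rw [hg (t+1) (by omega)]; exact hwt
      have harr := collider_arrows hnd (show t + 2 < (S :: ws ++ [x, y]).length by rw [hlenp]; omega)
        (by rw [hpw]; exact hwc)
      apply hnc
      have : IsColliderOn G (S :: ws ++ [x]) ((S :: ws ++ [x])[t+1]'(by rw [hlen1]; omega)) := by
        refine isColliderOn_of_idx (by rw [hlen1]; omega) ?_ ?_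
        · rw [← hg t (by omega), ← hg (t+1) (by omega)]; exact harr.1
        · rw [← hg (t+2) (by omega), ← hg (t+1) (by omega)]; exact harr.2
      rwa [hwt] at this
    · -- every collider (an element of ws) is its own descendant in ZSet
      intro w hw
      obtain ⟨t, ht2, hwt, -, -⟩ := idx_of_isColliderOn hw
      rw [hlen1] at ht2
      have hin : w ∈ ws := by rw [← hwt]; exact hmid t (by omega)
      exact ⟨w, hwsZ w hin, ancestor_refl⟩

end CausalGraph
end

section
/- Let M be a MAG over V = {X, Y} ∪ O satisfying the pretreatment setup, let S ∈ O, and let Z ⊆ O \ {S}. Then every m-connecting path between S and X given Z has an arrowhead at X on its final edge (the path is into X) and does not pass through Y. -/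
namespace CausalGraph

variable {V : Type*}

section AuxLemmas

variable {G : MixedGraph V}

lemma anc_of_dir {a b : V} (hab : G.dir a b) : Ancestor G a b := by
  have hne : a ≠ b := fun h => G.dir_irrefl a (h ▸ hab)
  exact Or.inr ⟨[a, b], List.isChain_pair.2 hab, by simp [hne], rfl, rfl, by simp⟩

lemma anc_trans_dir {a b c : V} (hab : G.dir a b) (hbc : Ancestor G b c) :
    Ancestor G a c := by
  rcases hbc with rfl | ⟨q, hq, hnd, hhead, hlast, hlen⟩
  · exact anc_of_dir hab
  by_cases hac : a = c
  · exact Or.inl hac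
  by_cases haq : a ∈ q
  · obtain ⟨l₁, l₂, rfl⟩ := List.append_of_mem haq
    cases l₂ with
    | nil =>
      rw [List.getLast?_append_cons] at hlast
      simp at hlast
      exact absurd hlast hac
    | cons v l₂' =>
      refine Or.inr ⟨a :: v :: l₂', ?_, ?_, rfl, ?_, by simp⟩
      · exact (List.isChain_append.1 hq).2.1
      · exact List.Nodup.sublist (List.sublist_append_right _ _) hnd
      · rw [List.getLast?_append_cons] at hlast
        exact hlast
  · cases q with
    | nil => simp at hlen
    | cons b' q' =>
      have hb : b' = b := by simpa using hhead
      subst hb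
      refine Or.inr ⟨a :: b' :: q', ?_, ?_, rfl, ?_, by simp⟩
      · exact List.isChain_cons_cons.2 ⟨hab, hq⟩
      · exact List.nodup_cons.2 ⟨haq, hnd⟩
      · rw [List.getLast?_cons_cons]
        exact hlast

lemma exists_last_two {p : List V} (h : 2 ≤ p.length) :
    ∃ (l : List V) (u v : V), p = l ++ [u, v] := by
  induction p with
  | nil => simp at h
  | cons a t ih =>
    cases t with
    | nil => simp at h
    | cons b t' =>
      cases t' with
      | nil => exact ⟨[], a, b, rfl⟩
      | cons c t'' =>
        obtain ⟨l, u, v, hl⟩ := ih (by simp)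
        exact ⟨a :: l, u, v, by rw [List.cons_append, ← hl]⟩

lemma exists_intermediate {p : List V} {a b w : V}
    (hhead : p.head? = some a) (hlast : p.getLast? = some b)
    (hw : w ∈ p) (hwa : w ≠ a) (hwb : w ≠ b) :
    ∃ (u v : V) (l₁ l₂ : List V), p = l₁ ++ u :: w :: v :: l₂ := by
  obtain ⟨l₁, l₂, rfl⟩ := List.append_of_mem hw
  cases l₂ with
  | nil =>
    rw [List.getLast?_append_cons] at hlast
    simp at hlast
    exact absurd hlast hwb
  | cons v l₂' =>
    rcases List.eq_nil_or_concat l₁ with rfl | ⟨l₁', u, rfl⟩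
    · simp at hhead
      exact absurd hhead hwa
    · exact ⟨u, v, l₁', l₂', by simp⟩

lemma adj_of_decomp {p : List V} {u w v : V} {l₁ l₂ : List V}
    (hchain : List.Chain' G.adj p) (hp : p = l₁ ++ u :: w :: v :: l₂) :
    G.adj u w ∧ G.adj w v := by
  subst hp
  have := (List.isChain_append.1 hchain).2.1
  rw [List.isChain_cons_cons, List.isChain_cons_cons] at this
  exact ⟨this.1, this.2.1⟩

lemma dir_of_not_arrowInto {u w : V} (hadj : G.adj u w)
    (hn : ¬ ArrowInto G u w) : G.dir w u := by
  rcases hadj with h1 | h1 | h1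
  · exact absurd (Or.inl h1) hn
  · exact h1
  · exact absurd (Or.inr h1) hn

end AuxLemmas

/-- Every m-connecting path between `S` and `x` given `Z` is into `x`
(arrowhead at `x` on its final edge) and does not pass through `y`. -/
theorem mconnecting_paths_into_treatment
    {V : Type*} [Fintype V] (G : MixedGraph V) (x y : V) (O : Set V)
    (h : Pretreatment G x y O) (S : V) (hS : S ∈ O)
    (Z : Set V) (hZ : Z ⊆ O \ {S}) :
    ∀ p, MConnPath G Z p S x →
      (∃ (l : List V) (u : V), p = l ++ [u, x] ∧ ArrowInto G u x) ∧ y ∉ p := by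
  intro p hp
  obtain ⟨⟨hchain, hnd, hhead, hlast, hlen⟩, hSZ, hxZ, hnc, hcol⟩ := hp
  have hmem : ∀ w : V, w = x ∨ w = y ∨ w ∈ O := by
    intro w
    have hw : w ∈ ({x, y} : Set V) ∪ O := h.cover ▸ Set.mem_univ w
    simpa [Set.mem_insert_iff, or_assoc] using hw
  have hyS : y ≠ S := fun hh => h.y_not_mem (hh ▸ hS)
  constructor
  · -- Part A: the path is into x
    obtain ⟨l, u, v, rfl⟩ := exists_last_two hlen
    have hv : v = x := by
      rw [show l ++ [u, v] = l ++ u :: [v] from rfl, List.getLast?_append_cons] at hlast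
      simpa using hlast
    have hv2 := hv.symm
    subst hv2
    refine ⟨l, u, rfl, ?_⟩
    by_contra hA
    have hadj : G.adj u x := by
      have := (List.isChain_append.1 hchain).2.1
      exact (List.isChain_cons_cons.1 this).1
    have hxu : G.dir x u := dir_of_not_arrowInto hadj hA
    rcases hmem u with h1 | h1 | hu
    · exact G.dir_irrefl x (h1 ▸ hxu)
    · -- u = y : y is second-to-last
      have hlne : l ≠ [] := by
        rintro rfl
        simp at hhead
        exact hyS (h1 ▸ hhead)
      obtain ⟨l', w, rfl⟩ := (List.eq_nil_or_concat l).resolve_left hlne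
      simp only [List.concat_eq_append] at hchain hcol hhead hlast hnd
      have hdecomp : l' ++ [w] ++ [u, x] = l' ++ w :: u :: x :: [] := by simp
      obtain ⟨hadjwu, _⟩ := adj_of_decomp hchain hdecomp
      by_cases hwu : ArrowInto G w u
      · have hucol : IsColliderOn G (l' ++ [w] ++ [u, x]) u :=
          ⟨w, x, l', [], hdecomp, hwu, Or.inl hxu⟩
        obtain ⟨d, hdZ, hanc⟩ := hcol u hucol
        exact h.y_not_anc_O d (hZ hdZ).1 (h1 ▸ hanc)
      · have huw : G.dir u w := dir_of_not_arrowInto hadjwu hwu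
        have huw' : G.dir y w := h1 ▸ huw
        rcases hmem w with h2 | h2 | hw
        · exact h.y_not_anc_x (anc_of_dir (show G.dir y x from h2 ▸ huw'))
        · exact G.dir_irrefl y (h2 ▸ huw')
        · exact h.y_not_anc_O w hw (anc_of_dir huw')
    · exact h.x_not_anc_O u hu (anc_of_dir hxu)
  · -- Part B: y is not on the path
    intro hyp
    have hyx : y ≠ x := fun hh => h.ne hh.symm
    obtain ⟨u, v, l₁, l₂, hdecomp⟩ :=
      exists_intermediate hhead hlast hyp hyS hyx
    obtain ⟨hadjuy, hadjyv⟩ := adj_of_decomp hchain hdecomp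
    by_cases huy : ArrowInto G u y
    · by_cases hvy : ArrowInto G v y
      · have hycol : IsColliderOn G p y := ⟨u, v, l₁, l₂, hdecomp, huy, hvy⟩
        obtain ⟨d, hdZ, hanc⟩ := hcol y hycol
        exact h.y_not_anc_O d (hZ hdZ).1 hanc
      · have hyv : G.dir y v := by
          rcases hadjyv with h1 | h1 | h1
          · exact h1
          · exact absurd (Or.inl h1) hvy
          · exact absurd (Or.inr (G.bidir_symm _ _ h1)) hvy
        rcases hmem v with h1 | h1 | hw
        · exact h.y_not_anc_x (anc_of_dir (h1 ▸ hyv))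
        · exact G.dir_irrefl y (h1 ▸ hyv)
        · exact h.y_not_anc_O v hw (anc_of_dir hyv)
    · have hyu : G.dir y u := dir_of_not_arrowInto hadjuy huy
      rcases hmem u with h1 | h1 | hw
      · exact h.y_not_anc_x (anc_of_dir (h1 ▸ hyu))
      · exact G.dir_irrefl y (h1 ▸ hyu)
      · exact h.y_not_anc_O u hw (anc_of_dir hyu)

end CausalGraph
end
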